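/- Let G=(V,E) be a weighted undirected connected simple locally finite graph with edge weights w_{xy}>0. Then for every function f: V → ℝ and every vertex x, the graph Laplacian satisfies the curvature dimension inequality Γ₂(f,f)(x) ≥ (1/2)(Δf(x))² + (2/D_w(x) − 1)·Γ(f,f)(x), where D_w(x) = max_{y∼x} d_y/w_{yx}. -/
import Mathlib


open SimpleGraph Finset

variable {V : Type*}

/-- A system of edge weights on `G`: symmetric, positive on edges and zero elsewhere. -/
def IsWeight (G : SimpleGraph V) (w : V → V → ℝ) : Prop :=
  (∀ u v, w u v = w v u) ∧ (∀ u v, G.Adj u v → 0 < w u v) ∧ (∀ u v, ¬G.Adj u v → w u v = 0)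

/-- The weighted degree `d_x = ∑_{y∼x} w_{xy}`. -/
noncomputable def wdeg (G : SimpleGraph V) [G.LocallyFinite] (w : V → V → ℝ) (x : V) : ℝ :=
  ∑ y ∈ G.neighborFinset x, w x y

/-- The probability measure attached to a vertex `x`: `m_x(z) = w_{xz}/d_x` for `z ∼ x`. -/
noncomputable def wMeasure (G : SimpleGraph V) [G.LocallyFinite] [DecidableRel G.Adj]
    (w : V → V → ℝ) (x z : V) : ℝ :=
  if G.Adj x z then w x z / wdeg G w x else 0

/-- A coupling (transfer plan) between the measures `m_x` and `m_y`. -/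
def IsWCoupling (G : SimpleGraph V) [G.LocallyFinite] [DecidableRel G.Adj]
    (w : V → V → ℝ) (x y : V) (ξ : V → V → ℝ) : Prop :=
  (∀ u v, 0 ≤ ξ u v) ∧
  (∀ u v, ξ u v ≠ 0 → G.Adj x u ∧ G.Adj y v) ∧
  (∀ u, ∑ v ∈ G.neighborFinset y, ξ u v = wMeasure G w x u) ∧
  (∀ v, ∑ u ∈ G.neighborFinset x, ξ u v = wMeasure G w y v)

/-- The transportation distance `W₁(m_x, m_y)`. -/
noncomputable def wW1 (G : SimpleGraph V) [G.LocallyFinite] [DecidableRel G.Adj]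
    (w : V → V → ℝ) (x y : V) : ℝ :=
  sInf { c : ℝ | ∃ ξ : V → V → ℝ, IsWCoupling G w x y ξ ∧
    c = ∑ u ∈ G.neighborFinset x, ∑ v ∈ G.neighborFinset y, (G.dist u v : ℝ) * ξ u v }

/-- Ollivier's Ricci curvature `κ(x,y) = 1 - W₁(m_x,m_y)/d(x,y)` on a weighted graph. -/
noncomputable def wRicci (G : SimpleGraph V) [G.LocallyFinite] [DecidableRel G.Adj]
    (w : V → V → ℝ) (x y : V) : ℝ :=
  1 - wW1 G w x y / (G.dist x y : ℝ)

/-- Positive part of a real number: `a₊ = max a 0`. -/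
noncomputable def posPart' (a : ℝ) : ℝ := max a 0

/-- The weighted graph Laplacian `Δf(x) = (1/d_x)∑_{y∼x} w_{xy} f(y) - f(x)`. -/
noncomputable def wlap (G : SimpleGraph V) [G.LocallyFinite] (w : V → V → ℝ)
    (f : V → ℝ) (x : V) : ℝ :=
  (wdeg G w x)⁻¹ * ∑ y ∈ G.neighborFinset x, w x y * f y - f x

/-- The Bakry–Émery operator `Γ(f,g)(x) = (1/2)(Δ(fg) - fΔg - gΔf)(x)`. -/
noncomputable def wgam (G : SimpleGraph V) [G.LocallyFinite] (w : V → V → ℝ)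
    (f g : V → ℝ) (x : V) : ℝ :=
  (1 / 2) * (wlap G w (f * g) x - f x * wlap G w g x - g x * wlap G w f x)

/-- The Bakry–Émery operator `Γ₂(f,f)(x) = (1/2)(ΔΓ(f,f) - 2Γ(f,Δf))(x)`. -/
noncomputable def wgam2 (G : SimpleGraph V) [G.LocallyFinite] (w : V → V → ℝ)
    (f : V → ℝ) (x : V) : ℝ :=
  (1 / 2) * (wlap G w (wgam G w f f) x - 2 * wgam G w f (wlap G w f) x)

/-- `D_w(x) = max_{y∼x} d_y / w_{yx}`. -/
noncomputable def Dw (G : SimpleGraph V) [G.LocallyFinite] (w : V → V → ℝ) (x : V) : ℝ :=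
  ⨆ y : G.neighborSet x, wdeg G w (y : V) / w (y : V) x

section AuxCD

variable (G : SimpleGraph V) [G.LocallyFinite] (w : V → V → ℝ)

lemma wlap_eq' (f : V → ℝ) (x : V) (hd : wdeg G w x ≠ 0) :
    wlap G w f x = (∑ y ∈ G.neighborFinset x, w x y * (f y - f x)) / wdeg G w x := by
  have h : ∑ y ∈ G.neighborFinset x, w x y * (f y - f x)
      = (∑ y ∈ G.neighborFinset x, w x y * f y) - wdeg G w x * f x := by
    rw [wdeg, Finset.sum_mul, ← Finset.sum_sub_distrib]
    exact Finset.sum_congr rfl fun y _ => by ring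
  rw [wlap, h]
  field_simp

lemma wgam_eq' (f g : V → ℝ) (x : V) (hd : wdeg G w x ≠ 0) :
    wgam G w f g x =
      (∑ y ∈ G.neighborFinset x, w x y * ((f y - f x) * (g y - g x))) / (2 * wdeg G w x) := by
  have key : ∑ y ∈ G.neighborFinset x, w x y * ((f y - f x) * (g y - g x))
      = ∑ y ∈ G.neighborFinset x, w x y * ((f * g) y - (f * g) x)
        - f x * ∑ y ∈ G.neighborFinset x, w x y * (g y - g x)
        - g x * ∑ y ∈ G.neighborFinset x, w x y * (f y - f x) := by
    rw [Finset.mul_sum, Finset.mul_sum, ← Finset.sum_sub_distrib, ← Finset.sum_sub_distrib]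
    exact Finset.sum_congr rfl fun y _ => by simp only [Pi.mul_apply]; ring
  rw [wgam, wlap_eq' G w (f * g) x hd, wlap_eq' G w g x hd, wlap_eq' G w f x hd]
  rw [eq_div_iff (by positivity : (2 : ℝ) * wdeg G w x ≠ 0), key]
  field_simp

end AuxCD


lemma wgamD (G : SimpleGraph V) [G.LocallyFinite] (w : V → V → ℝ) (f : V → ℝ) (x y : V)
    (hdy : wdeg G w y ≠ 0) :
    wgam G w f f y - (f y - f x) * wlap G w f y
      = (∑ z ∈ G.neighborFinset y, w y z * (f z - 2 * f y + f x) ^ 2) / (2 * wdeg G w y)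
        - (1 / 2) * ((f y - f x) * (f y - f x)) := by
  have hQ : ∑ z ∈ G.neighborFinset y, w y z * (f z - 2 * f y + f x) ^ 2
      = ∑ z ∈ G.neighborFinset y, w y z * ((f z - f y) * (f z - f y))
        - 2 * (f y - f x) * ∑ z ∈ G.neighborFinset y, w y z * (f z - f y)
        + (f y - f x) ^ 2 * wdeg G w y := by
    rw [wdeg, Finset.mul_sum, Finset.mul_sum, ← Finset.sum_sub_distrib, ← Finset.sum_add_distrib]
    exact Finset.sum_congr rfl fun z _ => by ring
  rw [wgam_eq' G w f f y hdy, wlap_eq' G w f y hdy, hQ]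
  field_simp
  ring

/-- On a weighted connected locally finite graph, the Laplacian satisfies
`Γ₂(f,f)(x) ≥ (1/2)(Δf(x))² + (2/D_w(x) - 1)·Γ(f,f)(x)`. -/
theorem weighted_CD_inequality (G : SimpleGraph V) [G.LocallyFinite] [DecidableRel G.Adj]
    (w : V → V → ℝ) (hw : IsWeight G w) (hG : G.Connected)
    (f : V → ℝ) (x : V) :
    wgam2 G w f x ≥
      (1 / 2) * (wlap G w f x) ^ 2 + (2 / Dw G w x - 1) * wgam G w f f x := by
  obtain ⟨hsymm, hpos, hzero⟩ := hw
  have hwnn : ∀ u v, 0 ≤ w u v := fun u v => by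
    by_cases h : G.Adj u v
    · exact (hpos u v h).le
    · exact (hzero u v h).ge
  by_cases hx : G.neighborFinset x = ∅
  · -- degenerate case: x has no neighbors
    haveI : IsEmpty (G.neighborSet x) := by
      constructor
      rintro ⟨y, hy⟩
      have hmem : y ∈ G.neighborFinset x := (G.mem_neighborFinset x y).mpr hy
      rw [hx] at hmem
      exact Finset.notMem_empty y hmem
    have hD : Dw G w x = 0 := by
      rw [Dw, iSup_of_empty', Real.sSup_empty]
    simp only [wgam2, wgam, wlap, wdeg, hx, Finset.sum_empty, hD, Pi.mul_apply,
      mul_zero, zero_sub, div_zero]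
    nlinarith [sq_nonneg (f x)]
  · obtain ⟨y0, hy0⟩ := Finset.nonempty_of_ne_empty hx
    have hdx : 0 < wdeg G w x := by
      rw [wdeg]
      exact Finset.sum_pos
        (fun y hy => hpos x y ((G.mem_neighborFinset x y).mp hy)) ⟨y0, hy0⟩
    have hd0 : wdeg G w x ≠ 0 := hdx.ne'
    have hdy : ∀ y ∈ G.neighborFinset x, 0 < wdeg G w y := by
      intro y hy
      have hadj : G.Adj x y := (G.mem_neighborFinset x y).mp hy
      have hxmem : x ∈ G.neighborFinset y := (G.mem_neighborFinset y x).mpr hadj.symm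
      calc (0:ℝ) < w y x := hpos y x hadj.symm
        _ ≤ wdeg G w y := by
            rw [wdeg]
            exact Finset.single_le_sum (fun z _ => hwnn y z) hxmem
    have hDub : ∀ y ∈ G.neighborFinset x, wdeg G w y / w y x ≤ Dw G w x := by
      intro y hy
      have hadj : G.Adj x y := (G.mem_neighborFinset x y).mp hy
      have hbdd : BddAbove (Set.range fun z : G.neighborSet x => wdeg G w (z : V) / w (z : V) x) :=
        (Set.finite_range _).bddAbove
      exact le_ciSup hbdd (⟨y, hadj⟩ : G.neighborSet x)
    have hDwpos : 0 < Dw G w x :=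
      lt_of_lt_of_le
        (div_pos (hdy y0 hy0) (hpos y0 x ((G.mem_neighborFinset x y0).mp hy0).symm))
        (hDub y0 hy0)
    have hkey : ∀ y ∈ G.neighborFinset x, 1 / Dw G w x ≤ w y x / wdeg G w y := by
      intro y hy
      have h1 : 0 < wdeg G w y / w y x :=
        div_pos (hdy y hy) (hpos y x ((G.mem_neighborFinset x y).mp hy).symm)
      have h2 := one_div_le_one_div_of_le h1 (hDub y hy)
      rwa [one_div_div] at h2
    -- notation
    have hlapf : wlap G w f x
        = (∑ y ∈ G.neighborFinset x, w x y * (f y - f x)) / wdeg G w x := wlap_eq' G w f x hd0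
    have hgamx : wgam G w f f x
        = (∑ y ∈ G.neighborFinset x, w x y * ((f y - f x) * (f y - f x))) / (2 * wdeg G w x) :=
      wgam_eq' G w f f x hd0
    have hA1 : ∑ y ∈ G.neighborFinset x, w x y * (f y - f x)
        = wdeg G w x * wlap G w f x := by
      rw [hlapf]; field_simp
    have hA2 : ∑ y ∈ G.neighborFinset x, w x y * ((f y - f x) * (f y - f x))
        = 2 * wdeg G w x * wgam G w f f x := by
      rw [hgamx]; field_simp
    have h1 : ∀ y ∈ G.neighborFinset x,
        w x y * (wgam G w f f y - (f y - f x) * wlap G w f y)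
          = (w x y / wdeg G w y)
              * (∑ z ∈ G.neighborFinset y, w y z * (f z - 2 * f y + f x) ^ 2) / 2
            - (1 / 2) * (w x y * ((f y - f x) * (f y - f x))) := by
      intro y hy
      have hdy0 : wdeg G w y ≠ 0 := (hdy y hy).ne'
      rw [wgamD G w f x y hdy0]
      field_simp
    have h2 : ∑ y ∈ G.neighborFinset x,
          w x y * (wgam G w f f y - (f y - f x) * wlap G w f y)
        = (∑ y ∈ G.neighborFinset x, (w x y / wdeg G w y)
            * ∑ z ∈ G.neighborFinset y, w y z * (f z - 2 * f y + f x) ^ 2) / 2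
          - wdeg G w x * wgam G w f f x := by
      rw [Finset.sum_congr rfl h1, Finset.sum_sub_distrib, ← Finset.sum_div,
        ← Finset.mul_sum, hA2]
      ring
    have hw0 : ∑ y ∈ G.neighborFinset x, w x y = wdeg G w x := rfl
    have hsum : ∑ y ∈ G.neighborFinset x, w x y * (wgam G w f f y - wgam G w f f x)
          - ∑ y ∈ G.neighborFinset x, w x y * ((f y - f x) * (wlap G w f y - wlap G w f x))
        = (∑ y ∈ G.neighborFinset x, (w x y / wdeg G w y)
            * ∑ z ∈ G.neighborFinset y, w y z * (f z - 2 * f y + f x) ^ 2) / 2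
          - 2 * (wdeg G w x * wgam G w f f x)
          + (wdeg G w x * wlap G w f x) * wlap G w f x := by
      rw [← Finset.sum_sub_distrib]
      rw [Finset.sum_congr rfl (fun y _ => by ring :
        ∀ y ∈ G.neighborFinset x,
          w x y * (wgam G w f f y - wgam G w f f x)
            - w x y * ((f y - f x) * (wlap G w f y - wlap G w f x))
          = w x y * (wgam G w f f y - (f y - f x) * wlap G w f y)
            - w x y * wgam G w f f x + w x y * (f y - f x) * wlap G w f x)]
      rw [Finset.sum_add_distrib, Finset.sum_sub_distrib, h2, ← Finset.sum_mul,
        ← Finset.sum_mul, hw0, hA1]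
      ring
    have hid : wgam2 G w f x
        = (∑ y ∈ G.neighborFinset x, (w x y / wdeg G w y)
            * ∑ z ∈ G.neighborFinset y, w y z * (f z - 2 * f y + f x) ^ 2) / (4 * wdeg G w x)
          + (1 / 2) * (wlap G w f x) ^ 2 - wgam G w f f x := by
      rw [wgam2, wlap_eq' G w (wgam G w f f) x hd0, wgam_eq' G w f (wlap G w f) x hd0]
      rw [show (1 / 2 : ℝ) * ((∑ y ∈ G.neighborFinset x, w x y * (wgam G w f f y - wgam G w f f x)) / wdeg G w x
            - 2 * ((∑ y ∈ G.neighborFinset x, w x y * ((f y - f x) * (wlap G w f y - wlap G w f x))) / (2 * wdeg G w x)))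
          = ((∑ y ∈ G.neighborFinset x, w x y * (wgam G w f f y - wgam G w f f x))
            - ∑ y ∈ G.neighborFinset x, w x y * ((f y - f x) * (wlap G w f y - wlap G w f x))) / (2 * wdeg G w x)
        from by field_simp]
      rw [hsum]
      field_simp
      ring
    have hQge : ∀ y ∈ G.neighborFinset x,
        (4 / Dw G w x) * (w x y * ((f y - f x) * (f y - f x)))
          ≤ (w x y / wdeg G w y)
              * ∑ z ∈ G.neighborFinset y, w y z * (f z - 2 * f y + f x) ^ 2 := by
      intro y hy
      have hadj : G.Adj x y := (G.mem_neighborFinset x y).mp hy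
      have hxmem : x ∈ G.neighborFinset y := (G.mem_neighborFinset y x).mpr hadj.symm
      have haa : (0:ℝ) ≤ (f y - f x) * (f y - f x) := mul_self_nonneg _
      have hQ : w y x * (f x - 2 * f y + f x) ^ 2
          ≤ ∑ z ∈ G.neighborFinset y, w y z * (f z - 2 * f y + f x) ^ 2 :=
        Finset.single_le_sum (f := fun z => w y z * (f z - 2 * f y + f x) ^ 2)
          (fun z _ => mul_nonneg (hwnn y z) (sq_nonneg _)) hxmem
      calc (4 / Dw G w x) * (w x y * ((f y - f x) * (f y - f x)))
          = (1 / Dw G w x) * (4 * (w x y * ((f y - f x) * (f y - f x)))) := by ring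
        _ ≤ (w y x / wdeg G w y) * (4 * (w x y * ((f y - f x) * (f y - f x)))) :=
            mul_le_mul_of_nonneg_right (hkey y hy)
              (by nlinarith [hwnn x y, haa])
        _ = (w x y / wdeg G w y) * (w y x * (f x - 2 * f y + f x) ^ 2) := by ring
        _ ≤ (w x y / wdeg G w y)
              * ∑ z ∈ G.neighborFinset y, w y z * (f z - 2 * f y + f x) ^ 2 :=
            mul_le_mul_of_nonneg_left hQ (div_nonneg (hwnn x y) (hdy y hy).le)
    have hTge : (4 / Dw G w x)
          * ∑ y ∈ G.neighborFinset x, w x y * ((f y - f x) * (f y - f x))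
        ≤ ∑ y ∈ G.neighborFinset x, (w x y / wdeg G w y)
            * ∑ z ∈ G.neighborFinset y, w y z * (f z - 2 * f y + f x) ^ 2 := by
      rw [Finset.mul_sum]
      exact Finset.sum_le_sum hQge
    have hfin : 2 / Dw G w x * wgam G w f f x
        ≤ (∑ y ∈ G.neighborFinset x, (w x y / wdeg G w y)
            * ∑ z ∈ G.neighborFinset y, w y z * (f z - 2 * f y + f x) ^ 2)
          / (4 * wdeg G w x) := by
      rw [hgamx]
      calc 2 / Dw G w x
            * ((∑ y ∈ G.neighborFinset x, w x y * ((f y - f x) * (f y - f x))) / (2 * wdeg G w x))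
          = ((4 / Dw G w x)
              * ∑ y ∈ G.neighborFinset x, w x y * ((f y - f x) * (f y - f x)))
            / (4 * wdeg G w x) := by
            field_simp
        _ ≤ _ :=
            (div_le_div_iff_of_pos_right (by linarith : (0:ℝ) < 4 * wdeg G w x)).mpr hTge
    rw [hid]
    nlinarith [hfin]
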